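/- arXiv:0712.1360 — 2 statements merged into one kernel-verified Lean document; each statement's English description precedes it below -/
import Mathlib

section
/- Let Phi satisfy the Restricted Isometry Condition with parameters (4n, eps), 0 < eps < 1. Let v be an n-sparse vector, e a vector in R^N, x = Phi v + e. Let I be an index set with |I| <= 3n and let v_hat be any vector supported in I minimizing ||x - Phi z||_2 over vectors z supported in I. Then ||v_hat - v||_2 <= ((1+eps)/(1-eps)) * ||v restricted to supp(v)\I||_2 + (2/(1-eps)) * ||e||_2. -/
open scoped BigOperators

noncomputable def l2 {d : ℕ} (v : Fin d → ℝ) : ℝ := Real.sqrt (∑ i, (v i)^2)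

noncomputable def l1 {d : ℕ} (v : Fin d → ℝ) : ℝ := ∑ i, |v i|

noncomputable def linf {d : ℕ} (v : Fin d → ℝ) : ℝ := ⨆ i, |v i|

noncomputable def restrict {d : ℕ} (v : Fin d → ℝ) (T : Finset (Fin d)) : Fin d → ℝ :=
  fun i => if i ∈ T then v i else 0

open Classical in
noncomputable def spt {d : ℕ} (v : Fin d → ℝ) : Finset (Fin d) :=
  Finset.univ.filter (fun i => v i ≠ 0)

def RIC {N d : ℕ} (Φ : Matrix (Fin N) (Fin d) ℝ) (m : ℕ) (ε : ℝ) : Prop :=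
  ∀ z : Fin d → ℝ, (spt z).card ≤ m →
    (1 - ε) * l2 z ≤ l2 (Φ.mulVec z) ∧ l2 (Φ.mulVec z) ≤ (1 + ε) * l2 z

/-!
The error `vhat - v` is supported in `I ∪ supp v`, hence `4n`-sparse, so the lower RIC bound
gives `(1 - ε) ‖vhat - v‖ ≤ ‖Φ (vhat - v)‖ ≤ ‖x - Φ vhat‖ + ‖e‖`. Comparing the least-squares
residual with that of the competitor `v|_I` gives `‖x - Φ vhat‖ ≤ ‖Φ (v|_{supp v \ I}) + e‖`,
and the upper RIC bound turns this into `(1 + ε) ‖v|_{supp v \ I}‖ + ‖e‖`.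
-/

section Norm

variable {d : ℕ}

lemma l2_eq_norm_toLp (a : Fin d → ℝ) : l2 a = ‖WithLp.toLp 2 a‖ := by
  simp [l2, EuclideanSpace.norm_eq, sq_abs]

lemma l2_add_le (a b : Fin d → ℝ) : l2 (a + b) ≤ l2 a + l2 b := by
  simpa only [l2_eq_norm_toLp, WithLp.toLp_add] using norm_add_le _ _

lemma l2_neg (a : Fin d → ℝ) : l2 (-a) = l2 a := by
  simp only [l2, Pi.neg_apply, neg_sq]

end Norm

section Support

variable {d : ℕ}

@[simp]
lemma mem_spt {v : Fin d → ℝ} {i : Fin d} : i ∈ spt v ↔ v i ≠ 0 := by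
  simp [spt]

lemma spt_sub_subset (a b : Fin d → ℝ) : spt (a - b) ⊆ spt a ∪ spt b := by
  intro i
  simp only [mem_spt, Finset.mem_union, Pi.sub_apply]
  contrapose!
  rintro ⟨ha, hb⟩
  simp [ha, hb]

lemma card_spt_sub_le (a b : Fin d → ℝ) : (spt (a - b)).card ≤ (spt a).card + (spt b).card :=
  (Finset.card_le_card (spt_sub_subset a b)).trans (Finset.card_union_le _ _)

lemma spt_restrict_subset_spt (v : Fin d → ℝ) (T : Finset (Fin d)) :
    spt (restrict v T) ⊆ spt v := by
  intro i
  simp only [mem_spt, restrict]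
  split_ifs <;> simp_all

lemma spt_restrict_subset (v : Fin d → ℝ) (T : Finset (Fin d)) : spt (restrict v T) ⊆ T := by
  intro i
  simp only [mem_spt, restrict]
  split_ifs <;> simp_all

lemma sub_restrict_eq_restrict_sdiff (v : Fin d → ℝ) (I : Finset (Fin d)) :
    v - restrict v I = restrict v (spt v \ I) := by
  funext i
  by_cases hi : i ∈ I <;> by_cases hv : v i = 0 <;> simp [restrict, hi, hv]

end Support

lemma l2_mulVec_sub_le {N d : ℕ} (Φ : Matrix (Fin N) (Fin d) ℝ) (u v : Fin d → ℝ)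
    (e : Fin N → ℝ) :
    l2 (Φ.mulVec (u - v)) ≤ l2 (Φ.mulVec v + e - Φ.mulVec u) + l2 e := by
  have h : Φ.mulVec (u - v) = -(Φ.mulVec v + e - Φ.mulVec u) + e := by
    rw [Matrix.mulVec_sub]; abel
  rw [h, ← l2_neg (Φ.mulVec v + e - Φ.mulVec u)]
  exact l2_add_le _ _

theorem stmt7_general {N d : ℕ} (Φ : Matrix (Fin N) (Fin d) ℝ) (n : ℕ) (ε : ℝ)
    (hε1 : ε < 1) (hRIC : RIC Φ (4 * n) ε)
    (v : Fin d → ℝ) (hv : (spt v).card ≤ n)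
    (e : Fin N → ℝ) (x : Fin N → ℝ) (hx : x = Φ.mulVec v + e)
    (I : Finset (Fin d)) (hI : I.card ≤ 3 * n)
    (vhat : Fin d → ℝ) (hsupp : spt vhat ⊆ I)
    (hmin : ∀ z : Fin d → ℝ, spt z ⊆ I →
      l2 (x - Φ.mulVec vhat) ≤ l2 (x - Φ.mulVec z)) :
    l2 (vhat - v) ≤ ((1 + ε) / (1 - ε)) * l2 (restrict v (spt v \ I))
      + (2 / (1 - ε)) * l2 e := by
  set r := restrict v (spt v \ I) with hr_def
  have hsparse : (spt (vhat - v)).card ≤ 4 * n := by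
    have := Finset.card_le_card hsupp
    have := card_spt_sub_le vhat v
    omega
  have hr : (spt r).card ≤ 4 * n :=
    (Finset.card_le_card (spt_restrict_subset_spt v _)).trans (by omega)
  have hresidual : l2 (x - Φ.mulVec vhat) ≤ (1 + ε) * l2 r + l2 e :=
    calc l2 (x - Φ.mulVec vhat) ≤ l2 (x - Φ.mulVec (restrict v I)) :=
          hmin _ (spt_restrict_subset v I)
      _ = l2 (Φ.mulVec r + e) := by
          rw [hr_def, hx, ← sub_restrict_eq_restrict_sdiff v I, Matrix.mulVec_sub]; congr 1; abel
      _ ≤ (1 + ε) * l2 r + l2 e := (l2_add_le _ _).trans (by linarith [(hRIC r hr).2])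
  have hlower : (1 - ε) * l2 (vhat - v) ≤ l2 (x - Φ.mulVec vhat) + l2 e :=
    (hRIC _ hsparse).1.trans (hx ▸ l2_mulVec_sub_le Φ vhat v e)
  rw [div_mul_eq_mul_div, div_mul_eq_mul_div, ← add_div, le_div_iff₀ (sub_pos.2 hε1)]
  linarith

/-- Error bound for the least squares output. -/
theorem stmt7 {N d : ℕ} (Φ : Matrix (Fin N) (Fin d) ℝ) (n : ℕ) (ε : ℝ)
    (hε : 0 < ε) (hε1 : ε < 1) (hRIC : RIC Φ (4 * n) ε)
    (v : Fin d → ℝ) (hv : (spt v).card ≤ n)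
    (e : Fin N → ℝ) (x : Fin N → ℝ) (hx : x = Φ.mulVec v + e)
    (I : Finset (Fin d)) (hI : I.card ≤ 3 * n)
    (vhat : Fin d → ℝ) (hsupp : spt vhat ⊆ I)
    (hmin : ∀ z : Fin d → ℝ, spt z ⊆ I →
      l2 (x - Φ.mulVec vhat) ≤ l2 (x - Φ.mulVec z)) :
    l2 (vhat - v) ≤ ((1 + ε) / (1 - ε)) * l2 (restrict v (spt v \ I))
      + (2 / (1 - ε)) * l2 e :=
  stmt7_general Φ n ε hε1 hRIC v hv e x hx I hI vhat hsupp hmin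
end

section
/- Let v and v_hat be vectors in R^d, let S be a set of 2n coordinates of v of largest absolute value and T a set of 2n coordinates of v_hat of largest absolute value. Let v_S = v|_S and v_hat_T = v_hat|_T. Then ||v_S - v_hat_T||_2 <= 3 * ||v_S - v_hat||_2. -/
/-! Since `T` carries the largest entries of `v̂` and `|S| ≤ |T|`, the vector `v̂_T` is at least as
close to `v̂` as any vector supported in `S`, in particular `‖v̂ - v̂_T‖ ≤ ‖v_S - v̂‖`. The triangle
inequality through `v̂` then gives the bound even with constant `2`. -/

open scoped BigOperators

namespace Finset

theorem sum_le_sum_of_card_le_of_forall_le {α M : Type*} [DecidableEq α] [AddCommMonoid M]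
    [LinearOrder M] [IsOrderedCancelAddMonoid M] {s t : Finset α} {f : α → M}
    (hf : ∀ i, 0 ≤ f i) (hcard : #s ≤ #t) (htop : ∀ i ∈ t, ∀ j ∉ t, f j ≤ f i) :
    ∑ i ∈ s, f i ≤ ∑ i ∈ t, f i := by
  rw [← sum_sdiff_le_sum_sdiff]
  have hcard' : #(s \ t) ≤ #(t \ s) := card_sdiff_le_card_sdiff_iff.mpr hcard
  obtain hts | hts := (t \ s).eq_empty_or_nonempty
  · rw [hts, card_empty, Nat.le_zero, card_eq_zero] at hcard'
    simp [hts, hcard']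
  set m := (t \ s).inf' hts f
  have hlow : ∀ i ∈ s \ t, f i ≤ m := fun i hi =>
    le_inf' _ _ fun j hj => htop j (mem_sdiff.mp hj).1 i (mem_sdiff.mp hi).2
  calc ∑ i ∈ s \ t, f i ≤ #(s \ t) • m := sum_le_card_nsmul _ _ _ hlow
    _ ≤ #(t \ s) • m := nsmul_le_nsmul_left (le_inf' _ _ fun j _ => hf j) hcard'
    _ ≤ ∑ i ∈ t \ s, f i := card_nsmul_le_sum _ _ _ fun j hj => inf'_le _ hj

end Finset

theorem l2_eq_norm {d : ℕ} (v : Fin d → ℝ) : l2 v = ‖WithLp.toLp 2 v‖ := by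
  simp [l2, EuclideanSpace.norm_eq, sq_abs]

theorem l2_nonneg {d : ℕ} (v : Fin d → ℝ) : 0 ≤ l2 v := Real.sqrt_nonneg _

theorem l2_sub_le_l2_sub_add_l2_sub {d : ℕ} (a b c : Fin d → ℝ) :
    l2 (a - c) ≤ l2 (a - b) + l2 (b - c) := by
  simp only [l2_eq_norm, WithLp.toLp_sub]
  exact norm_sub_le_norm_sub_add_norm_sub _ _ _

theorem sum_sq_sub_restrict {d : ℕ} (w : Fin d → ℝ) (T : Finset (Fin d)) :
    ∑ i, ((w - restrict w T) i) ^ 2 = ∑ i ∈ Tᶜ, w i ^ 2 := by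
  rw [← Finset.sum_add_sum_compl T,
    Finset.sum_eq_zero fun i hi => by simp [restrict, hi], zero_add]
  exact Finset.sum_congr rfl fun i hi => by simp [restrict, Finset.mem_compl.mp hi]

theorem l2_sub_restrict_le_l2_restrict_sub {d : ℕ} (u w : Fin d → ℝ) {S T : Finset (Fin d)}
    (hcard : S.card ≤ T.card) (hT : ∀ i ∈ T, ∀ j ∉ T, |w j| ≤ |w i|) :
    l2 (w - restrict w T) ≤ l2 (restrict u S - w) := by
  apply Real.sqrt_le_sqrt
  have hST : ∑ i ∈ S, w i ^ 2 ≤ ∑ i ∈ T, w i ^ 2 :=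
    Finset.sum_le_sum_of_card_le_of_forall_le (fun i => sq_nonneg _) hcard
      fun i hi j hj => by
        simpa only [sq_abs] using pow_le_pow_left₀ (abs_nonneg _) (hT i hi j hj) 2
  calc ∑ i, ((w - restrict w T) i) ^ 2 = ∑ i ∈ Tᶜ, w i ^ 2 := sum_sq_sub_restrict w T
    _ ≤ ∑ i ∈ Sᶜ, w i ^ 2 := by
      linarith [Finset.sum_compl_add_sum S fun i => w i ^ 2,
        Finset.sum_compl_add_sum T fun i => w i ^ 2]
    _ = ∑ i ∈ Sᶜ, ((restrict u S - w) i) ^ 2 :=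
      Finset.sum_congr rfl fun i hi => by simp [restrict, Finset.mem_compl.mp hi]
    _ ≤ ∑ i, ((restrict u S - w) i) ^ 2 :=
      Finset.sum_le_univ_sum_of_nonneg fun i => sq_nonneg _

theorem stmt15_general {d : ℕ} (v vhat : Fin d → ℝ) (n : ℕ)
    (S T : Finset (Fin d)) (hS : S.card = 2 * n) (hT : T.card = 2 * n)
    (hTbig : ∀ i ∈ T, ∀ j ∉ T, |vhat j| ≤ |vhat i|) :
    l2 (restrict v S - restrict vhat T) ≤ 3 * l2 (restrict v S - vhat) := by
  have hbest : l2 (vhat - restrict vhat T) ≤ l2 (restrict v S - vhat) :=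
    l2_sub_restrict_le_l2_restrict_sub v vhat (hS.trans hT.symm).le hTbig
  calc l2 (restrict v S - restrict vhat T)
      ≤ l2 (restrict v S - vhat) + l2 (vhat - restrict vhat T) :=
        l2_sub_le_l2_sub_add_l2_sub _ _ _
    _ ≤ 3 * l2 (restrict v S - vhat) := by linarith [l2_nonneg (restrict v S - vhat)]

/-- Truncation lemma from Corollary 3.2: ‖v_S - v̂_T‖₂ ≤ 3‖v_S - v̂‖₂. -/
theorem stmt15 {d : ℕ} (v vhat : Fin d → ℝ) (n : ℕ)
    (S T : Finset (Fin d)) (hS : S.card = 2 * n) (hT : T.card = 2 * n)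
    (hSbig : ∀ i ∈ S, ∀ j ∉ S, |v j| ≤ |v i|)
    (hTbig : ∀ i ∈ T, ∀ j ∉ T, |vhat j| ≤ |vhat i|) :
    l2 (restrict v S - restrict vhat T) ≤ 3 * l2 (restrict v S - vhat) :=
  stmt15_general v vhat n S T hS hT hTbig
end
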